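/- With the g-prior on β_γ and Bernoulli(w) prior on γ, the maximum a posteriori model argmax_γ p(γ|y,g,w) coincides with argmax_γ ( ss_γ/σ² − F(g,w)|γ| ), where F(g,w) = ((1+g)/g)(2 log((1−w)/w) + log(1+g)). -/

import Mathlib

/-! The log posterior is affine in `ss_γ` and `|γ|`: its `|γ|`-coefficient is
`-(log (1 + g) / 2 + log ((1 - w) / w))` and its `ss_γ`-coefficient `g / (2 (1 + g) σ²)`, and their ratio is
`-σ² F`. A positive slope makes `log` and hence `post` monotone in the score. -/

open Real

namespace GPrior

noncomputable def posteriorWeight (p : ℕ) (g w σ2 s : ℝ) (k : ℕ) : ℝ :=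
  (1 + g) ^ (-(k : ℝ) / 2) * exp (g / (1 + g) * s / (2 * σ2)) * w ^ k * (1 - w) ^ (p - k)

noncomputable def penalty (g w : ℝ) : ℝ :=
  (1 + g) / g * (2 * log ((1 - w) / w) + log (1 + g))

variable {p k : ℕ} {g w σ2 s : ℝ}

lemma posteriorWeight_pos (hg : 0 < 1 + g) (hw0 : 0 < w) (hw1 : w < 1) :
    0 < posteriorWeight p g w σ2 s k := by
  have : 0 < 1 - w := sub_pos.mpr hw1
  unfold posteriorWeight
  positivity

-- `k ≤ p` keeps the natural subtraction `p - k` from truncating.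
lemma log_posteriorWeight (hg : 0 < g) (hw0 : 0 < w) (hw1 : w < 1) (hk : k ≤ p) :
    log (posteriorWeight p g w σ2 s k) =
      g / (2 * (1 + g)) * (s / σ2 - penalty g w * k) + p * log (1 - w) := by
  have h1g : 0 < 1 + g := by linarith
  have h1w : 0 < 1 - w := sub_pos.mpr hw1
  unfold posteriorWeight penalty
  rw [log_mul (by positivity) (by positivity), log_mul (by positivity) (by positivity),
    log_mul (by positivity) (by positivity), log_rpow h1g, log_exp, log_pow, log_pow,
    log_div h1w.ne' hw0.ne', Nat.cast_sub hk]
  field_simp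
  ring

end GPrior

lemma Real.le_iff_le_of_log_eq_affine {ι : Type*} {f h : ι → ℝ} {a C : ℝ} (ha : 0 < a)
    (hf : ∀ i, 0 < f i) (hlog : ∀ i, log (f i) = a * h i + C) (i j : ι) :
    f i ≤ f j ↔ h i ≤ h j := by
  rw [← log_le_log_iff (hf i) (hf j), hlog, hlog, add_le_add_iff_right,
    mul_le_mul_iff_right₀ ha]

theorem map_model_equals_penalized_criterion_general {p : ℕ}
    (ss : Finset (Fin p) → ℝ) (g w σ2 : ℝ)
    (hg : 0 < g) (hw0 : 0 < w) (hw1 : w < 1)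
    (post score : Finset (Fin p) → ℝ) (F : ℝ)
    (hpost : ∀ γ, post γ = (1 + g) ^ (-(γ.card : ℝ) / 2) *
        Real.exp (g / (1 + g) * ss γ / (2 * σ2)) * w ^ γ.card * (1 - w) ^ (p - γ.card))
    (hF : F = (1 + g) / g * (2 * Real.log ((1 - w) / w) + Real.log (1 + g)))
    (hscore : ∀ γ, score γ = ss γ / σ2 - F * γ.card) :
    (∃ C : ℝ, ∀ γ, Real.log (post γ) = g / (2 * (1 + g)) * score γ + C) ∧
    (∀ γ γ' : Finset (Fin p), post γ ≤ post γ' ↔ score γ ≤ score γ') := by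
  have hlog (γ : Finset (Fin p)) :
      log (post γ) = g / (2 * (1 + g)) * score γ + p * log (1 - w) := by
    rw [hpost, hscore, hF]
    exact GPrior.log_posteriorWeight hg hw0 hw1
      ((Finset.card_le_univ γ).trans_eq (Fintype.card_fin p))
  have hpos (γ : Finset (Fin p)) : 0 < post γ := by
    rw [hpost]
    exact GPrior.posteriorWeight_pos (by linarith) hw0 hw1
  exact ⟨⟨_, hlog⟩, Real.le_iff_le_of_log_eq_affine (by positivity) hpos hlog⟩

/-- With the g-prior on `β_γ` and a Bernoulli(w) prior on `γ`, the log unnormalized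
posterior `log((1+g)^{−|γ|/2} exp((g/(1+g)) ss_γ/(2σ²)) w^{|γ|}(1−w)^{p−|γ|})` is a strictly
increasing affine function (with slope `g/(2(1+g))`) of `ss_γ/σ² − F(g,w)|γ|`, where
`F(g,w) = ((1+g)/g)(2 log((1−w)/w) + log(1+g))`; consequently the MAP model coincides with
the maximizer of the penalized criterion `ss_γ/σ² − F(g,w)|γ|`. -/
theorem map_model_equals_penalized_criterion {p : ℕ}
    (ss : Finset (Fin p) → ℝ) (g w σ2 : ℝ)
    (hg : 0 < g) (hw0 : 0 < w) (hw1 : w < 1) (hσ : 0 < σ2)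
    (post score : Finset (Fin p) → ℝ) (F : ℝ)
    (hpost : ∀ γ, post γ = (1 + g) ^ (-(γ.card : ℝ) / 2) *
        Real.exp (g / (1 + g) * ss γ / (2 * σ2)) * w ^ γ.card * (1 - w) ^ (p - γ.card))
    (hF : F = (1 + g) / g * (2 * Real.log ((1 - w) / w) + Real.log (1 + g)))
    (hscore : ∀ γ, score γ = ss γ / σ2 - F * γ.card) :
    (∃ C : ℝ, ∀ γ, Real.log (post γ) = g / (2 * (1 + g)) * score γ + C) ∧
    (∀ γ γ' : Finset (Fin p), post γ ≤ post γ' ↔ score γ ≤ score γ') :=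
  map_model_equals_penalized_criterion_general ss g w σ2 hg hw0 hw1 post score F hpost hF hscore
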